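/- arXiv:2112.00389 — 6 statements merged into one kernel-verified Lean document; each statement's English description precedes it below -/
import Mathlib

section
/- If z is a type-1 approximation of Prox^D_{τh}(y) with precision ε (that is, G_y(x) ≥ G_y(z) − ε for all x ∈ ℝ^d), then there exists r ∈ ℝ^d with ‖r‖_D ≤ √(2τε) such that (1/τ)D(y − z − r) ∈ ∂_ε h(z). -/
/-!
The objective `G_y` is strongly convex in the `D`-norm, so comparing `G_y` at `z`, at `x` and at
their midpoint shows that `G_y` grows quadratically away from the `ε`-minimizer `z`; hence it
attains its minimum at some `x₀`. Minimality of `x₀` makes `(1/τ) D (y - x₀)` an exact subgradient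
of `h` at `x₀`, and combining this with `G_y z ≤ G_y x₀ + ε` gives both `‖z - x₀‖²_D ≤ 2τε` and
the `ε`-subgradient inequality at `z`, with `r = x₀ - z`.
-/

open Matrix

/-- squared M-norm: ⟨x, M x⟩ -/
noncomputable def sqnorm {d : ℕ} (M : Matrix (Fin d) (Fin d) ℝ) (x : Fin d → ℝ) : ℝ :=
  x ⬝ᵥ M.mulVec x

/-- M-norm: √⟨x, M x⟩ -/
noncomputable def mnorm {d : ℕ} (M : Matrix (Fin d) (Fin d) ℝ) (x : Fin d → ℝ) : ℝ :=
  Real.sqrt (x ⬝ᵥ M.mulVec x)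

open Filter Topology Set

lemma Matrix.IsHermitian.dotProduct_mulVec_comm {n : Type*} [Fintype n] {A : Matrix n n ℝ}
    (hA : A.IsHermitian) (a b : n → ℝ) : a ⬝ᵥ A *ᵥ b = b ⬝ᵥ A *ᵥ a := by
  rw [dotProduct_mulVec, ← mulVec_transpose, ← conjTranspose_eq_transpose_of_trivial, hA.eq,
    dotProduct_comm]

lemma le_sub_of_forall_mem_Ioo_le_sub_mul {a b c : ℝ}
    (h : ∀ t ∈ Ioo (0 : ℝ) 1, a ≤ b - (1 - t) * c) : a ≤ b - c := by
  have hlim : Tendsto (fun t : ℝ => b - (1 - t) * c) (𝓝[>] 0) (𝓝 (b - c)) := by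
    have hcont : Continuous fun t : ℝ => b - (1 - t) * c := by fun_prop
    simpa using (hcont.tendsto 0).mono_left nhdsWithin_le_nhds
  exact ge_of_tendsto hlim (eventually_of_mem (Ioo_mem_nhdsGT one_pos) h)

section QuadraticForm

variable {d : ℕ} {D : Matrix (Fin d) (Fin d) ℝ}

lemma sqnorm_add (hD : D.IsHermitian) (a b : Fin d → ℝ) :
    sqnorm D (a + b) = sqnorm D a + 2 * (b ⬝ᵥ D *ᵥ a) + sqnorm D b := by
  simp only [sqnorm, mulVec_add, dotProduct_add, add_dotProduct]
  linear_combination hD.dotProduct_mulVec_comm a b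

lemma sqnorm_sub_comm (a b : Fin d → ℝ) : sqnorm D (a - b) = sqnorm D (b - a) := by
  rw [← neg_sub, sqnorm, mulVec_neg, neg_dotProduct, dotProduct_neg, neg_neg, sqnorm]

lemma sqnorm_convexCombo (t : ℝ) (a b : Fin d → ℝ) :
    sqnorm D ((1 - t) • a + t • b) =
      (1 - t) * sqnorm D a + t * sqnorm D b - t * (1 - t) * sqnorm D (b - a) := by
  simp only [sqnorm, mulVec_add, mulVec_sub, mulVec_smul, dotProduct_add, add_dotProduct,
    dotProduct_sub, sub_dotProduct, dotProduct_smul, smul_dotProduct, smul_eq_mul]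
  ring

lemma sqnorm_nonneg (hD : D.PosSemidef) (v : Fin d → ℝ) : 0 ≤ sqnorm D v :=
  hD.dotProduct_mulVec_nonneg v

lemma continuous_sqnorm : Continuous (sqnorm D) := by
  unfold sqnorm dotProduct mulVec
  fun_prop

lemma Matrix.PosDef.exists_pos_mul_sq_norm_le (hD : D.PosDef) :
    ∃ c > 0, ∀ v, c * ‖v‖ ^ 2 ≤ sqnorm D v := by
  obtain ⟨c, hc, hcS⟩ := (isCompact_sphere (0 : Fin d → ℝ) 1).exists_forall_le'
    continuous_sqnorm.continuousOn (a := 0) fun u hu =>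
      hD.dotProduct_mulVec_pos (ne_zero_of_mem_unit_sphere ⟨u, hu⟩)
  refine ⟨c, hc, fun v => ?_⟩
  rcases eq_or_ne v 0 with rfl | hv
  · simp [sqnorm]
  have hnorm : 0 < ‖v‖ := norm_pos_iff.mpr hv
  have hu := hcS (‖v‖⁻¹ • v) (by simp [norm_smul, hnorm.ne'])
  rw [sqnorm, mulVec_smul, dotProduct_smul, smul_dotProduct, ← sqnorm, smul_smul, smul_eq_mul,
    ← mul_inv, ← sq, le_inv_mul_iff₀ (by positivity)] at hu
  linarith

end QuadraticForm

/-- The objective `G_y`, whose minimizer is `Prox^D_{τh}(y)`. -/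
noncomputable def proxObjective {d : ℕ} (h : (Fin d → ℝ) → ℝ) (D : Matrix (Fin d) (Fin d) ℝ)
    (τ : ℝ) (y x : Fin d → ℝ) : ℝ :=
  h x + (1 / (2 * τ)) * sqnorm D (x - y)

section ProxObjective

variable {d : ℕ} {h : (Fin d → ℝ) → ℝ} {D : Matrix (Fin d) (Fin d) ℝ} {τ : ℝ} {y : Fin d → ℝ}

lemma proxObjective_sub_proxObjective (hD : D.IsHermitian) (x x' : Fin d → ℝ) :
    proxObjective h D τ y x - proxObjective h D τ y x' =
      h x - h x' - ((1 / τ) • D *ᵥ (y - x')) ⬝ᵥ (x - x') + 1 / (2 * τ) * sqnorm D (x - x') := by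
  have hsplit : x - y = (x' - y) + (x - x') := by abel
  have hflip : (x - x') ⬝ᵥ D *ᵥ (x' - y) = -(D *ᵥ (y - x') ⬝ᵥ (x - x')) := by
    rw [← neg_sub y x', mulVec_neg, dotProduct_neg, dotProduct_comm]
  rw [proxObjective, proxObjective, hsplit, sqnorm_add hD, hflip, smul_dotProduct, smul_eq_mul]
  ring

lemma proxObjective_convexCombo_le (hconv : ConvexOn ℝ univ h) {t : ℝ} (ht₀ : 0 ≤ t)
    (ht₁ : t ≤ 1) (a b : Fin d → ℝ) :
    proxObjective h D τ y ((1 - t) • a + t • b) ≤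
      (1 - t) * proxObjective h D τ y a + t * proxObjective h D τ y b
        - 1 / (2 * τ) * (t * (1 - t) * sqnorm D (b - a)) := by
  have hh := hconv.2 (mem_univ a) (mem_univ b) (sub_nonneg.mpr ht₁) ht₀ (sub_add_cancel 1 t)
  have hshift : (1 - t) • a + t • b - y = (1 - t) • (a - y) + t • (b - y) := by module
  have hq := sqnorm_convexCombo (D := D) t (a - y) (b - y)
  rw [sub_sub_sub_cancel_right] at hq
  simp only [proxObjective, hshift, hq, smul_eq_mul] at hh ⊢
  linarith

lemma continuous_proxObjective (hconv : ConvexOn ℝ univ h) :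
    Continuous (proxObjective h D τ y) := by
  have hh : Continuous h := continuousOn_univ.mp (hconv.continuousOn isOpen_univ)
  exact hh.add (continuous_const.mul (continuous_sqnorm.comp (continuous_sub_right y)))

lemma proxObjective_quadratic_growth_of_approx_min (hconv : ConvexOn ℝ univ h) {z : Fin d → ℝ}
    {ε : ℝ} (hz : ∀ x, proxObjective h D τ y z - ε ≤ proxObjective h D τ y x) (x : Fin d → ℝ) :
    proxObjective h D τ y z - 2 * ε + 1 / (4 * τ) * sqnorm D (x - z) ≤
      proxObjective h D τ y x := by
  have hmid := proxObjective_convexCombo_le (D := D) (τ := τ) (y := y) hconv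
    (by norm_num : (0 : ℝ) ≤ 1 / 2) (by norm_num) z x
  have hτ : 1 / (4 * τ) = 1 / (2 * τ) * (1 / 2) := by ring
  rw [hτ]
  linarith [hz ((1 - 1 / 2 : ℝ) • z + (1 / 2 : ℝ) • x)]

lemma proxObjective_exists_min (hD : D.PosDef) (hτ : 0 < τ) (hconv : ConvexOn ℝ univ h)
    {z : Fin d → ℝ} {ε : ℝ} (hz : ∀ x, proxObjective h D τ y z - ε ≤ proxObjective h D τ y x) :
    ∃ x₀, ∀ x, proxObjective h D τ y x₀ ≤ proxObjective h D τ y x := by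
  obtain ⟨c, hc, hcD⟩ := hD.exists_pos_mul_sq_norm_le
  have hgrowth (x : Fin d → ℝ) :
      proxObjective h D τ y z - 2 * ε + 1 / (4 * τ) * c * dist x z ^ 2 ≤
        proxObjective h D τ y x := by
    grw [mul_assoc, dist_eq_norm, hcD (x - z)]
    exact proxObjective_quadratic_growth_of_approx_min hconv hz x
  have htendsto : Tendsto
      (fun x => proxObjective h D τ y z - 2 * ε + 1 / (4 * τ) * c * dist x z ^ 2)
      (cocompact _) atTop :=
    tendsto_atTop_add_const_left _ _ <| Tendsto.const_mul_atTop (by positivity) <|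
      (tendsto_pow_atTop two_ne_zero).comp (tendsto_dist_right_cocompact_atTop z)
  exact (continuous_proxObjective hconv).exists_forall_le (tendsto_atTop_mono hgrowth htendsto)

lemma proxObjective_quadratic_growth_of_min (hconv : ConvexOn ℝ univ h) {x₀ : Fin d → ℝ}
    (hx₀ : ∀ x, proxObjective h D τ y x₀ ≤ proxObjective h D τ y x) (x : Fin d → ℝ) :
    proxObjective h D τ y x₀ + 1 / (2 * τ) * sqnorm D (x - x₀) ≤ proxObjective h D τ y x := by
  refine le_sub_iff_add_le.mp (le_sub_of_forall_mem_Ioo_le_sub_mul fun t ht => ?_)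
  have hcomb := proxObjective_convexCombo_le (D := D) (τ := τ) (y := y) hconv ht.1.le ht.2.le x₀ x
  refine le_of_mul_le_mul_left ?_ ht.1
  linarith [hx₀ ((1 - t) • x₀ + t • x)]

lemma subgradient_of_proxObjective_min (hD : D.IsHermitian) (hconv : ConvexOn ℝ univ h)
    {x₀ : Fin d → ℝ} (hx₀ : ∀ x, proxObjective h D τ y x₀ ≤ proxObjective h D τ y x)
    (x : Fin d → ℝ) : h x₀ + ((1 / τ) • D *ᵥ (y - x₀)) ⬝ᵥ (x - x₀) ≤ h x := by
  linarith [proxObjective_quadratic_growth_of_min hconv hx₀ x,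
    proxObjective_sub_proxObjective (h := h) (τ := τ) (y := y) hD x x₀]

end ProxObjective

theorem type1_implies_approx_subdifferential_general {d : ℕ}
    (D : Matrix (Fin d) (Fin d) ℝ) (hD : D.PosDef)
    (τ : ℝ) (hτ : 0 < τ)
    (h : (Fin d → ℝ) → ℝ) (hconv : ConvexOn ℝ Set.univ h)
    (y : Fin d → ℝ) (ε : ℝ)
    (G : (Fin d → ℝ) → ℝ)
    (hG : ∀ x, G x = h x + (1 / (2 * τ)) * sqnorm D (x - y))
    (z : Fin d → ℝ) (htype1 : ∀ x, G x ≥ G z - ε) :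
    ∃ r : Fin d → ℝ, mnorm D r ≤ Real.sqrt (2 * τ * ε) ∧
      ∀ x, h x ≥ h z + ((1 / τ) • D.mulVec (y - z - r)) ⬝ᵥ (x - z) - ε := by
  obtain rfl : G = proxObjective h D τ y := funext hG
  obtain ⟨x₀, hx₀⟩ := proxObjective_exists_min hD hτ hconv htype1
  have hsub := subgradient_of_proxObjective_min hD.isHermitian hconv hx₀
  have hgap := proxObjective_sub_proxObjective (h := h) (τ := τ) (y := y) hD.isHermitian z x₀
  set p := (1 / τ) • D *ᵥ (y - x₀)
  have hdist : 1 / (2 * τ) * sqnorm D (z - x₀) ≤ ε := by linarith [htype1 x₀, hsub z]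
  refine ⟨x₀ - z, ?_, fun x => ?_⟩
  · rw [mnorm, ← sqnorm, sqnorm_sub_comm]
    refine Real.sqrt_le_sqrt ?_
    rwa [div_mul_eq_mul_div, one_mul, div_le_iff₀ (by positivity), mul_comm] at hdist
  · have hsplit : p ⬝ᵥ (x - x₀) = p ⬝ᵥ (x - z) + p ⬝ᵥ (z - x₀) := by
      rw [← dotProduct_add, sub_add_sub_cancel]
    rw [sub_sub_sub_cancel_right]
    have hq : 0 ≤ 1 / (2 * τ) * sqnorm D (z - x₀) :=
      mul_nonneg (by positivity) (sqnorm_nonneg hD.posSemidef _)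
    linarith [hsub x, htype1 x₀]

/-- If z is a type-1 approximation of Prox^D_{τh}(y) with precision ε, then there exists
r with ‖r‖_D ≤ √(2τε) such that (1/τ)D(y − z − r) ∈ ∂_ε h(z). -/
theorem type1_implies_approx_subdifferential {d : ℕ}
    (D : Matrix (Fin d) (Fin d) ℝ) (hD : D.PosDef)
    (τ : ℝ) (hτ : 0 < τ)
    (h : (Fin d → ℝ) → ℝ) (hconv : ConvexOn ℝ Set.univ h)
    (y : Fin d → ℝ) (ε : ℝ) (hε : 0 ≤ ε)
    (G : (Fin d → ℝ) → ℝ)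
    (hG : ∀ x, G x = h x + (1 / (2 * τ)) * sqnorm D (x - y))
    (z : Fin d → ℝ) (htype1 : ∀ x, G x ≥ G z - ε) :
    ∃ r : Fin d → ℝ, mnorm D r ≤ Real.sqrt (2 * τ * ε) ∧
      ∀ x, h x ≥ h z + ((1 / τ) • D.mulVec (y - z - r)) ⬝ᵥ (x - z) - ε :=
  type1_implies_approx_subdifferential_general D hD τ hτ h hconv y ε G hG z htype1
end

section
/- If z is a type-2 approximation of Prox^D_{τh}(y) with precision ε (that is, (1/τ)D(y − z) ∈ ∂_ε h(z)), then z is a type-1 approximation of Prox^D_{τh}(y) with precision ε; that is, G_y(x) ≥ G_y(z) − ε for all x ∈ ℝ^d. -/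
open Matrix

/-
Expanding the square around z, ‖x − y‖²_D = ‖x − z‖²_D − 2⟨D(y − z), x − z⟩ + ‖z − y‖²_D.
Hence G_y(x) − G_y(z) = h(x) − h(z) − (1/τ)⟨D(y − z), x − z⟩ + (1/(2τ))‖x − z‖²_D, and the
ε-subgradient inequality bounds the first three terms below by −ε, while the last is nonnegative.
-/

namespace Matrix

variable {d : ℕ} {M : Matrix (Fin d) (Fin d) ℝ}

theorem IsSymm.dotProduct_mulVec_comm (hM : M.IsSymm) (a b : Fin d → ℝ) :
    a ⬝ᵥ M *ᵥ b = b ⬝ᵥ M *ᵥ a := by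
  rw [dotProduct_mulVec, ← mulVec_transpose, hM.eq, dotProduct_comm]

theorem IsSymm.sqnorm_add (hM : M.IsSymm) (a b : Fin d → ℝ) :
    sqnorm M (a + b) = sqnorm M a + 2 * (M *ᵥ b ⬝ᵥ a) + sqnorm M b := by
  have hab := hM.dotProduct_mulVec_comm a b
  simp only [sqnorm, mulVec_add, dotProduct_add, add_dotProduct]
  rw [dotProduct_comm (M *ᵥ b)]
  linarith

theorem PosSemidef.sqnorm_nonneg (hM : M.PosSemidef) (x : Fin d → ℝ) : 0 ≤ sqnorm M x := by
  simpa [sqnorm] using hM.dotProduct_mulVec_nonneg x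

end Matrix

theorem type2_implies_type1_general {d : ℕ}
    (D : Matrix (Fin d) (Fin d) ℝ) (hD : D.PosDef)
    (τ : ℝ) (hτ : 0 < τ)
    (h : (Fin d → ℝ) → ℝ)
    (y : Fin d → ℝ) (ε : ℝ)
    (z : Fin d → ℝ)
    (htype2 : ∀ x, h x ≥ h z + ((1 / τ) • D.mulVec (y - z)) ⬝ᵥ (x - z) - ε) :
    ∀ x, h x + (1 / (2 * τ)) * sqnorm D (x - y)
        ≥ h z + (1 / (2 * τ)) * sqnorm D (z - y) - ε := by
  intro x
  have hsymm : D.IsSymm := isHermitian_iff_isSymm.mp hD.isHermitian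
  have hexpand : sqnorm D (x - y)
      = sqnorm D (x - z) - 2 * (D *ᵥ (y - z) ⬝ᵥ (x - z)) + sqnorm D (z - y) := by
    rw [show x - y = (x - z) + (z - y) by abel, hsymm.sqnorm_add,
      show z - y = -(y - z) by abel, mulVec_neg, neg_dotProduct]
    ring
  have hsub := htype2 x
  rw [smul_dotProduct, smul_eq_mul] at hsub
  have hquad : 0 ≤ 1 / (2 * τ) * sqnorm D (x - z) :=
    mul_nonneg (by positivity) (hD.posSemidef.sqnorm_nonneg _)
  rw [hexpand]
  field_simp at hsub hquad ⊢
  linarith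

/-- If z is a type-2 approximation of Prox^D_{τh}(y) with precision ε, i.e.
(1/τ)D(y − z) ∈ ∂_ε h(z), then z is a type-1 approximation:
G_y(x) ≥ G_y(z) − ε for all x. -/
theorem type2_implies_type1 {d : ℕ}
    (D : Matrix (Fin d) (Fin d) ℝ) (hD : D.PosDef)
    (τ : ℝ) (hτ : 0 < τ)
    (h : (Fin d → ℝ) → ℝ) (hconv : ConvexOn ℝ Set.univ h)
    (y : Fin d → ℝ) (ε : ℝ) (hε : 0 ≤ ε)
    (z : Fin d → ℝ)
    (htype2 : ∀ x, h x ≥ h z + ((1 / τ) • D.mulVec (y - z)) ⬝ᵥ (x - z) - ε) :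
    ∀ x, h x + (1 / (2 * τ)) * sqnorm D (x - y)
        ≥ h z + (1 / (2 * τ)) * sqnorm D (z - y) - ε :=
  type2_implies_type1_general D hD τ hτ h y ε z htype2
end

section
/- Under the setup of Lemma 2.5 (z₁ a type-2 approximation with precision ε of the minimizer of z ↦ g(z) + (1/(2τ))‖z − (z₀ − D⁻¹u)‖²_D, and z₂ a type-1 approximation with precision ε of the minimizer of z ↦ g(z) + (1/(2τ))‖z − (z₀ − D⁻¹v)‖²_D), one has ‖z₁ − z₂‖²_D ≤ (√(2τε) + ‖u − v‖_{D⁻¹})·‖z₁ − z₂‖_D + 2τε. -/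
/-!
Put `w₁ = z₀ - D⁻¹u`, `w₂ = z₀ - D⁻¹v` and `pᵢ = D (wᵢ - zᵢ) / τ`. The type-2 condition says that `p₁`
is an `ε`-subgradient of `g` at `z₁`. For the type-1 point `z₂`, testing optimality against
`z₂ + t (x - z₂)` and using convexity shows that `p₂` is a subgradient of `g` at `z₂` up to the error
`t ‖x - z₂‖²_D / (2τ) + ε / t`, for every `t ∈ (0, 1]`. Adding the two subgradient inequalities between
`z₁` and `z₂`, and bounding `⟨u - v, z₁ - z₂⟩` by Cauchy–Schwarz for the dual norms, gives with
`n = ‖z₁ - z₂‖_D` that `n² ≤ ‖u - v‖_{D⁻¹} n + t n² / 2 + τε + τε / t`. The choice `t = √(2τε) / n`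
balances the two `t`-terms when `n > √(2τε)`; otherwise the claim is immediate.
-/

open Matrix

/-- Type-1 approximation with precision `ε` of the minimizer of `g + ‖· - w‖²_D / (2τ)`. -/
def IsApproxProx {d : ℕ} (D : Matrix (Fin d) (Fin d) ℝ) (τ ε : ℝ) (g : (Fin d → ℝ) → ℝ)
    (w z : Fin d → ℝ) : Prop :=
  ∀ x, g x + (1 / (2 * τ)) * sqnorm D (x - w) ≥ g z + (1 / (2 * τ)) * sqnorm D (z - w) - ε

lemma sq_le_of_forall_sq_le_add {n c e : ℝ} (hn : 0 ≤ n) (hc : 0 ≤ c) (he : 0 < e)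
    (h : ∀ t, 0 < t → t ≤ 1 → n ^ 2 ≤ c * n + t / 2 * n ^ 2 + e + e / t) :
    n ^ 2 ≤ (√(2 * e) + c) * n + e := by
  set s := √(2 * e)
  have hs : 0 < s := Real.sqrt_pos.mpr (by positivity)
  have hs2 : s ^ 2 = 2 * e := Real.sq_sqrt (by positivity)
  rcases le_or_gt n s with hns | hsn
  · nlinarith [mul_nonneg hc hn]
  · have hn₀ : 0 < n := hs.trans hsn
    have hbound := h (s / n) (by positivity) ((div_le_one hn₀).mpr hsn.le)
    have hquad_term : s / n / 2 * n ^ 2 = s * n / 2 := by field_simp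
    have hdiv_term : e / (s / n) = s * n / 2 := by field_simp; nlinarith
    linarith

section

variable {d : ℕ} {M : Matrix (Fin d) (Fin d) ℝ}

lemma Matrix.IsSymm.dotProduct_mulVec_comm_s4 (hM : M.IsSymm) (x y : Fin d → ℝ) :
    x ⬝ᵥ M *ᵥ y = y ⬝ᵥ M *ᵥ x := by
  rw [dotProduct_mulVec, ← mulVec_transpose, hM.eq, dotProduct_comm]

lemma sqnorm_add_smul (hM : M.IsSymm) (x y : Fin d → ℝ) (t : ℝ) :
    sqnorm M (x + t • y) = sqnorm M x + 2 * t * (x ⬝ᵥ M *ᵥ y) + t ^ 2 * sqnorm M y := by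
  simp only [sqnorm, mulVec_add, mulVec_smul, dotProduct_add, add_dotProduct, dotProduct_smul,
    smul_dotProduct, smul_eq_mul, hM.dotProduct_mulVec_comm_s4 y x]
  ring

lemma sqnorm_nonneg_s4 (hM : M.PosSemidef) (x : Fin d → ℝ) : 0 ≤ sqnorm M x := by
  simpa [sqnorm] using hM.dotProduct_mulVec_nonneg x

lemma mnorm_sq (hM : M.PosSemidef) (x : Fin d → ℝ) : mnorm M x ^ 2 = sqnorm M x :=
  Real.sq_sqrt (sqnorm_nonneg_s4 hM x)

lemma Matrix.PosSemidef.dotProduct_mulVec_sq_le (hM : M.PosSemidef) (x y : Fin d → ℝ) :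
    (x ⬝ᵥ M *ᵥ y) ^ 2 ≤ sqnorm M x * sqnorm M y := by
  have := LinearMap.BilinForm.apply_mul_apply_le_of_forall_zero_le (toLinearMap₂' ℝ M)
    (fun z ↦ by rw [toLinearMap₂'_apply']; exact sqnorm_nonneg_s4 hM z) x y
  simp only [toLinearMap₂'_apply'] at this
  rwa [(isHermitian_iff_isSymm.mp hM.isHermitian).dotProduct_mulVec_comm_s4 y x, ← sq] at this

lemma abs_dotProduct_le_mnorm_inv_mul_mnorm {D : Matrix (Fin d) (Fin d) ℝ} (hD : D.PosDef)
    (y x : Fin d → ℝ) : |y ⬝ᵥ x| ≤ mnorm D⁻¹ y * mnorm D x := by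
  have hy : D *ᵥ (D⁻¹ *ᵥ y) = y := by
    rw [mulVec_mulVec, mul_nonsing_inv _ (isUnit_iff_ne_zero.mpr hD.det_pos.ne'), one_mulVec]
  have hcs := hD.posSemidef.dotProduct_mulVec_sq_le x (D⁻¹ *ᵥ y)
  rw [hy, dotProduct_comm] at hcs
  have hdual : sqnorm D (D⁻¹ *ᵥ y) = sqnorm D⁻¹ y := by
    rw [sqnorm, hy, dotProduct_comm]; rfl
  rw [hdual, mul_comm] at hcs
  calc |y ⬝ᵥ x| ≤ √(sqnorm D⁻¹ y * sqnorm D x) := Real.abs_le_sqrt hcs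
    _ = mnorm D⁻¹ y * mnorm D x := Real.sqrt_mul (sqnorm_nonneg_s4 hD.inv.posSemidef y) _

lemma IsApproxProx.le_of_convexOn {D : Matrix (Fin d) (Fin d) ℝ} (hD : D.IsSymm)
    {τ ε : ℝ} (hτ : 0 < τ) {g : (Fin d → ℝ) → ℝ} (hg : ConvexOn ℝ Set.univ g)
    {w z : Fin d → ℝ} (h : IsApproxProx D τ ε g w z) {t : ℝ} (ht₀ : 0 < t) (ht₁ : t ≤ 1)
    (x : Fin d → ℝ) :
    g z + ((1 / τ) • D *ᵥ (w - z)) ⬝ᵥ (x - z) - t / (2 * τ) * sqnorm D (x - z) - ε / t ≤ g x := by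
  set B := (z - w) ⬝ᵥ D *ᵥ (x - z)
  set Q := sqnorm D (x - z)
  have hconv : g (z + t • (x - z)) ≤ (1 - t) * g z + t * g x := by
    have := hg.2 (Set.mem_univ z) (Set.mem_univ x) (sub_nonneg.mpr ht₁) ht₀.le (by ring)
    rwa [smul_eq_mul, smul_eq_mul, show (1 - t) • z + t • x = z + t • (x - z) by module] at this
  have hmin := h (z + t • (x - z))
  rw [show z + t • (x - z) - w = (z - w) + t • (x - z) by abel, sqnorm_add_smul hD] at hmin
  have hlin : ((1 / τ) • D *ᵥ (w - z)) ⬝ᵥ (x - z) = -(B / τ) := by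
    rw [smul_dotProduct, dotProduct_comm, ← hD.dotProduct_mulVec_comm_s4, ← neg_sub z w,
      neg_dotProduct, smul_eq_mul]
    ring
  have hscaled : (g z - B / τ - t / (2 * τ) * Q - g x) * t ≤ ε := by
    have : 1 / (2 * τ) * (sqnorm D (z - w) + 2 * t * B + t ^ 2 * Q)
        = 1 / (2 * τ) * sqnorm D (z - w) + t * (B / τ) + t * (t / (2 * τ) * Q) := by
      field_simp
    linarith
  have := (le_div_iff₀ ht₀).mpr hscaled
  rw [hlin]
  linarith

lemma residual_dotProduct_add_residual_dotProduct (D : Matrix (Fin d) (Fin d) ℝ)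
    (τ : ℝ) (w₁ w₂ z₁ z₂ : Fin d → ℝ) :
    ((1 / τ) • D *ᵥ (w₁ - z₁)) ⬝ᵥ (z₂ - z₁) + ((1 / τ) • D *ᵥ (w₂ - z₂)) ⬝ᵥ (z₁ - z₂)
      = (sqnorm D (z₁ - z₂) + (D *ᵥ (w₂ - w₁)) ⬝ᵥ (z₁ - z₂)) / τ := by
  have : (w₂ - z₂) - (w₁ - z₁) = (z₁ - z₂) + (w₂ - w₁) := by abel
  rw [← neg_sub z₁ z₂, dotProduct_neg, ← neg_dotProduct, ← add_dotProduct, ← smul_neg,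
    ← mulVec_neg, ← smul_add, ← mulVec_add, neg_add_eq_sub, this, mulVec_add, smul_dotProduct,
    add_dotProduct, dotProduct_comm (D *ᵥ (z₁ - z₂)), sqnorm, smul_eq_mul]
  ring

end

/-- Key quadratic inequality for the distance between inexact proximal points. -/
theorem dist_sq_ineq {d : ℕ}
    (D : Matrix (Fin d) (Fin d) ℝ) (hD : D.PosDef)
    (τ : ℝ) (hτ : 0 < τ) (ε : ℝ) (hε : 0 < ε)
    (g : (Fin d → ℝ) → ℝ) (hconv : ConvexOn ℝ Set.univ g)
    (z₀ u v z₁ z₂ : Fin d → ℝ)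
    (h1 : ∀ x, g x ≥ g z₁ +
        ((1 / τ) • D.mulVec (z₀ - D⁻¹.mulVec u - z₁)) ⬝ᵥ (x - z₁) - ε)
    (h2 : ∀ x, g x + (1 / (2 * τ)) * sqnorm D (x - (z₀ - D⁻¹.mulVec v))
        ≥ g z₂ + (1 / (2 * τ)) * sqnorm D (z₂ - (z₀ - D⁻¹.mulVec v)) - ε) :
    sqnorm D (z₁ - z₂)
      ≤ (Real.sqrt (2 * τ * ε) + mnorm D⁻¹ (u - v)) * mnorm D (z₁ - z₂) + 2 * τ * ε := by
  set a := z₁ - z₂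
  have hw : D *ᵥ ((z₀ - D⁻¹ *ᵥ v) - (z₀ - D⁻¹ *ᵥ u)) = u - v := by
    rw [sub_sub_sub_cancel_left, ← mulVec_sub, mulVec_mulVec,
      mul_nonsing_inv _ (isUnit_iff_ne_zero.mpr hD.det_pos.ne'), one_mulVec]
  have hquad (t : ℝ) (ht₀ : 0 < t) (ht₁ : t ≤ 1) :
      sqnorm D a ≤ -((u - v) ⬝ᵥ a) + t / 2 * sqnorm D a + τ * ε + τ * ε / t := by
    have h₂ := IsApproxProx.le_of_convexOn (isHermitian_iff_isSymm.mp hD.isHermitian) hτ hconv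
      h2 ht₀ ht₁ z₁
    have hsum : (sqnorm D a + (u - v) ⬝ᵥ a) / τ ≤ t / (2 * τ) * sqnorm D a + ε + ε / t := by
      rw [← hw, ← residual_dotProduct_add_residual_dotProduct]
      linarith [h1 z₂]
    have hscale : (t / (2 * τ) * sqnorm D a + ε + ε / t) * τ
        = t / 2 * sqnorm D a + τ * ε + τ * ε / t := by
      field_simp
    linarith [(div_le_iff₀ hτ).mp hsum]
  have hn := sq_le_of_forall_sq_le_add (n := mnorm D a) (c := mnorm D⁻¹ (u - v))
    (Real.sqrt_nonneg _) (Real.sqrt_nonneg _) (mul_pos hτ hε) fun t ht₀ ht₁ ↦ by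
      rw [mnorm_sq hD.posSemidef]
      linarith [hquad t ht₀ ht₁, neg_le_abs ((u - v) ⬝ᵥ a),
        abs_dotProduct_le_mnorm_inv_mul_mnorm hD (u - v) a]
  rw [← mnorm_sq hD.posSemidef a, mul_assoc 2 τ ε]
  linarith [hn, mul_pos hτ hε]
end

section
/- (Lemma 3.1a) Fix λ > 0, δ ≥ 0 and points xᵏ, xᵏ⁺¹ ∈ ℝⁿ, yᵏ⁺¹ ∈ ℝᵐ such that (1/λ)AᵀRA(xᵏ − xᵏ⁺¹) ∈ ∂_δ (x ↦ f(x) + ⟨Ax, yᵏ⁺¹⟩)(xᵏ⁺¹). Then for every x ∈ ℝⁿ: L(xᵏ⁺¹, yᵏ⁺¹) − L(x, yᵏ⁺¹) ≤ (1/(2λ))(‖x − xᵏ‖²_{AᵀRA} − ‖x − xᵏ⁺¹‖²_{AᵀRA} − ‖xᵏ⁺¹ − xᵏ‖²_{AᵀRA}) + δ. -/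
open Matrix Finset

/-- The Lagrangian L(x,y) = f(x) + ⟨Ax, y⟩ − g(y). -/
noncomputable def Lag {n m : ℕ} (f : (Fin n → ℝ) → ℝ) (g : (Fin m → ℝ) → ℝ)
    (A : Matrix (Fin m) (Fin n) ℝ) (x : Fin n → ℝ) (y : Fin m → ℝ) : ℝ :=
  f x + A.mulVec x ⬝ᵥ y - g y

lemma symm_dot {n : ℕ} (M : Matrix (Fin n) (Fin n) ℝ) (hM : Mᵀ = M) (a b : Fin n → ℝ) :
    a ⬝ᵥ M.mulVec b = b ⬝ᵥ M.mulVec a := by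
  rw [Matrix.dotProduct_mulVec, ← Matrix.mulVec_transpose, hM, dotProduct_comm]

lemma sqnorm_A {n m : ℕ} (A : Matrix (Fin m) (Fin n) ℝ) (R : Matrix (Fin m) (Fin m) ℝ)
    (v : Fin n → ℝ) : sqnorm R (A.mulVec v) = v ⬝ᵥ (Aᵀ * R * A).mulVec v := by
  rw [sqnorm, Matrix.mul_assoc, ← Matrix.mulVec_mulVec, Matrix.dotProduct_mulVec v,
    Matrix.vecMul_transpose, Matrix.mulVec_mulVec]

/-- Lemma 3.1a. -/
theorem primal_update_ineq {n m : ℕ}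
    (f : (Fin n → ℝ) → ℝ) (g : (Fin m → ℝ) → ℝ)
    (hf : ConvexOn ℝ Set.univ f) (hg : ConvexOn ℝ Set.univ g)
    (A : Matrix (Fin m) (Fin n) ℝ)
    (R : Matrix (Fin m) (Fin m) ℝ) (hR : R.PosDef)
    (lam : ℝ) (hlam : 0 < lam) (δ : ℝ) (hδ : 0 ≤ δ)
    (xk xk1 : Fin n → ℝ) (yk1 : Fin m → ℝ)
    (hii : ∀ x, f x + A.mulVec x ⬝ᵥ yk1
        ≥ f xk1 + A.mulVec xk1 ⬝ᵥ yk1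
          + ((1 / lam) • (Aᵀ * R * A).mulVec (xk - xk1)) ⬝ᵥ (x - xk1) - δ) :
    ∀ x, Lag f g A xk1 yk1 - Lag f g A x yk1
      ≤ (1 / (2 * lam)) * (sqnorm R (A.mulVec (x - xk))
          - sqnorm R (A.mulVec (x - xk1)) - sqnorm R (A.mulVec (xk1 - xk))) + δ := by
  intro x
  have hMsymm : (Aᵀ * R * A)ᵀ = Aᵀ * R * A := by
    have hRs : Rᵀ = R := hR.1
    simp [Matrix.transpose_mul, hRs, Matrix.mul_assoc]
  set M := Aᵀ * R * A with hM
  have h := hii x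
  have key : ((1 / lam) • M.mulVec (xk - xk1)) ⬝ᵥ (x - xk1)
      = (1 / (2 * lam)) * ((x - xk1) ⬝ᵥ M.mulVec (x - xk1)
          + (xk1 - xk) ⬝ᵥ M.mulVec (xk1 - xk) - (x - xk) ⬝ᵥ M.mulVec (x - xk)) := by
    have hexp : (x - xk) ⬝ᵥ M.mulVec (x - xk)
        = (x - xk1) ⬝ᵥ M.mulVec (x - xk1) + (xk1 - xk) ⬝ᵥ M.mulVec (xk1 - xk)
          + 2 * ((x - xk1) ⬝ᵥ M.mulVec (xk1 - xk)) := by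
      have : x - xk = (x - xk1) + (xk1 - xk) := by abel
      rw [this, Matrix.mulVec_add, add_dotProduct, dotProduct_add,
        dotProduct_add, symm_dot M hMsymm (xk1 - xk) (x - xk1)]
      ring
    have hneg : M.mulVec (xk - xk1) ⬝ᵥ (x - xk1)
        = -((x - xk1) ⬝ᵥ M.mulVec (xk1 - xk)) := by
      have : xk - xk1 = -(xk1 - xk) := by abel
      rw [dotProduct_comm, this, Matrix.mulVec_neg, dotProduct_neg]
    rw [smul_dotProduct, smul_eq_mul, hneg, hexp]
    field_simp
    ring
  simp only [Lag, sqnorm_A, ← hM]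
  have h2 : f xk1 + A.mulVec xk1 ⬝ᵥ yk1 - (f x + A.mulVec x ⬝ᵥ yk1)
      ≤ δ - ((1 / lam) • M.mulVec (xk - xk1)) ⬝ᵥ (x - xk1) := by linarith
  rw [key] at h2
  linarith
end

section
/- (Lemma 3.2) Let (μ_N)_{N≥0} be a nonnegative real sequence satisfying μ_N² ≤ T_N + Σ_{n=1}^N σ_n μ_n for all N ≥ 1, where (T_N)_{N≥0} is a nondecreasing real sequence with T_0 ≥ μ_0², and σ_n ≥ 0 for all n. Then for all N ≥ 1: μ_N ≤ (1/2)Σ_{n=1}^N σ_n + (T_N + ((1/2)Σ_{n=1}^N σ_n)²)^{1/2}. -/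
open Finset

/-!
Let `M` be the largest of `μ 0, …, μ N`. Every `μ n` with `n ≤ N` satisfies the recursion with
`T N` and the full sum up to `N` on the right (for `n = 0` this is `T 0 ≥ μ 0 ^ 2`), and bounding
each `μ n` in the sum by `M` gives the quadratic inequality `M ^ 2 ≤ T N + 2 A M` with
`A = (1/2) ∑ σ n`. Solving it gives `μ N ≤ M ≤ A + √(T N + A ^ 2)`.
-/

lemma le_add_sqrt_of_sq_le_add_two_mul {x a t : ℝ} (h : x ^ 2 ≤ t + 2 * a * x) :
    x ≤ a + √(t + a ^ 2) := by
  have hx : |x - a| ≤ √(t + a ^ 2) := Real.abs_le_sqrt (by nlinarith)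
  linarith [le_abs_self (x - a)]

section Recursion

variable {μ T σ : ℕ → ℝ}

lemma sq_le_add_sum_of_le (hμ : ∀ N, 0 ≤ μ N)
    (hrec : ∀ N, 1 ≤ N → μ N ^ 2 ≤ T N + ∑ n ∈ Icc 1 N, σ n * μ n)
    (hT : Monotone T) (hT0 : μ 0 ^ 2 ≤ T 0) (hσ : ∀ n, 0 ≤ σ n) {m N : ℕ} (hmN : m ≤ N) :
    μ m ^ 2 ≤ T N + ∑ n ∈ Icc 1 N, σ n * μ n := by
  have hsum_mono : ∑ n ∈ Icc 1 m, σ n * μ n ≤ ∑ n ∈ Icc 1 N, σ n * μ n :=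
    sum_le_sum_of_subset_of_nonneg (Icc_subset_Icc_right hmN)
      fun n _ _ => mul_nonneg (hσ n) (hμ n)
  rcases Nat.eq_zero_or_pos m with rfl | hm
  · have hsum_nonneg : 0 ≤ ∑ n ∈ Icc 1 N, σ n * μ n :=
      sum_nonneg fun n _ => mul_nonneg (hσ n) (hμ n)
    linarith [hT hmN]
  · linarith [hrec m hm, hT hmN]

lemma sum_mul_le_sum_mul_of_le (hσ : ∀ n, 0 ≤ σ n) {M : ℝ} {N : ℕ}
    (hM : ∀ n ≤ N, μ n ≤ M) :
    ∑ n ∈ Icc 1 N, σ n * μ n ≤ (∑ n ∈ Icc 1 N, σ n) * M := by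
  rw [sum_mul]
  exact sum_le_sum fun n hn => mul_le_mul_of_nonneg_left (hM n (mem_Icc.mp hn).2) (hσ n)

end Recursion

/-- Lemma 3.2 (a technical recursion lemma). -/
theorem recursion_bound (μ T σ : ℕ → ℝ)
    (hμ : ∀ N, 0 ≤ μ N)
    (hrec : ∀ N, 1 ≤ N → μ N ^ 2 ≤ T N + ∑ n ∈ Finset.Icc 1 N, σ n * μ n)
    (hT : Monotone T) (hT0 : μ 0 ^ 2 ≤ T 0)
    (hσ : ∀ n, 0 ≤ σ n) :
    ∀ N, 1 ≤ N →
      μ N ≤ (1 / 2) * ∑ n ∈ Finset.Icc 1 N, σ n +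
        Real.sqrt (T N + ((1 / 2) * ∑ n ∈ Finset.Icc 1 N, σ n) ^ 2) := by
  intro N _
  obtain ⟨m, hm, hmax⟩ := exists_max_image (range (N + 1)) μ ⟨0, by simp⟩
  have hmax' : ∀ n ≤ N, μ n ≤ μ m := fun n hn => hmax n (mem_range_succ_iff.mpr hn)
  have hquad : μ m ^ 2 ≤ T N + 2 * ((1 / 2) * ∑ n ∈ Icc 1 N, σ n) * μ m := by
    have := sq_le_add_sum_of_le hμ hrec hT hT0 hσ (mem_range_succ_iff.mp hm)
    linarith [sum_mul_le_sum_mul_of_le hσ hmax']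
  exact (hmax' N le_rfl).trans (le_add_sqrt_of_sq_le_add_two_mul hquad)
end

section
/- (Ergodic inequality (3.8)) Let sequences (xᵏ)_{k≥0} ⊆ ℝⁿ and (yᵏ)_{k≥1}, (ȳᵏ)_{k≥0} ⊆ ℝᵐ be generated by Algorithm 1 with stepsizes τ_k, λ_k > 0 and tolerances ε_{k+1}, δ_{k+1} ≥ 0 (i.e., conditions (i)–(iii) hold at every iteration k). Assume (τ_k) and (λ_k) are nondecreasing and R − τ_kλ_kS⁻¹ is positive definite for every k. Then for every N ≥ 1 and all (x, y) ∈ ℝⁿ × ℝᵐ: N·(L(x̂ᴺ, y) − L(x, ŷᴺ)) ≤ (1/(2τ_0))‖y − ȳ⁰‖²_S − (1/(2τ_N))‖y − ȳᴺ‖²_S + (1/(2λ_0))‖x − x⁰‖²_{AᵀRA} − (1/(2λ_N))‖x − xᴺ‖²_{AᵀRA} + Σ_{k=0}^{N−1} √(ε_{k+1}/τ_k)·‖y − ȳᵏ⁺¹‖_S + Σ_{k=0}^{N−1} (2ε_{k+1} + δ_{k+1}). -/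
open Matrix Finset Filter

/-!
Each iteration is estimated separately. Inequality (ii), with the polarization identity for
`‖A ·‖²_R`, bounds the primal part of `L(xᵏ⁺¹, y) - L(x, yᵏ⁺¹)`. Inequality (iii) says that `ȳᵏ⁺¹` is
an `ε/2`-minimizer of a convex function plus `(1/2τ)‖· - ȳᵏ‖²_S`; comparing with the points on the
segment towards `y` (and optimizing the position on the segment) upgrades it to a three-point
inequality with error `ε/2 + √(ε/τ) ‖y - ȳᵏ⁺¹‖_S`. Inequality (i) at `ȳᵏ⁺¹` then bounds the dual
part, leaving the cross term `⟨A(xᵏ⁺¹ - xᵏ), ȳᵏ⁺¹ - yᵏ⁺¹⟩`, which `R ⪰ τλS⁻¹` lets Young's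
inequality absorb into the negative squared norms. Summing over `k`, the distance terms telescope
since `1/τ` and `1/λ` decrease, and Jensen's inequality passes to the ergodic averages.
-/

open scoped Topology

section QuadraticForm

variable {d : ℕ} {S : Matrix (Fin d) (Fin d) ℝ}

theorem dotProduct_mulVec_comm_of_isHermitian (hS : S.IsHermitian) (u v : Fin d → ℝ) :
    u ⬝ᵥ S *ᵥ v = v ⬝ᵥ S *ᵥ u := by
  have hT : Sᵀ = S := by simpa [conjTranspose_eq_transpose_of_trivial] using hS.eq
  rw [dotProduct_mulVec, ← hT, vecMul_transpose, hT, dotProduct_comm]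

theorem sqnorm_nonneg_s11 (hS : S.PosSemidef) (v : Fin d → ℝ) : 0 ≤ sqnorm S v := by
  simpa [sqnorm] using hS.dotProduct_mulVec_nonneg v

theorem sqnorm_zero (S : Matrix (Fin d) (Fin d) ℝ) : sqnorm S 0 = 0 := by
  simp [sqnorm]

theorem sqnorm_smul (S : Matrix (Fin d) (Fin d) ℝ) (c : ℝ) (v : Fin d → ℝ) :
    sqnorm S (c • v) = c ^ 2 * sqnorm S v := by
  simp only [sqnorm, mulVec_smul, dotProduct_smul, smul_dotProduct, smul_eq_mul]
  ring

theorem sqnorm_sub_comm_s11 (S : Matrix (Fin d) (Fin d) ℝ) (u v : Fin d → ℝ) :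
    sqnorm S (u - v) = sqnorm S (v - u) := by
  rw [← neg_sub, sqnorm, sqnorm, mulVec_neg, neg_dotProduct, dotProduct_neg, neg_neg]

theorem two_mul_mulVec_sub_dotProduct_sub (hS : S.IsHermitian) (a b c : Fin d → ℝ) :
    2 * (S *ᵥ (a - b) ⬝ᵥ (c - b)) = sqnorm S (a - b) + sqnorm S (c - b) - sqnorm S (c - a) := by
  rw [dotProduct_comm]
  simp only [sqnorm, mulVec_sub, dotProduct_sub, sub_dotProduct]
  have := dotProduct_mulVec_comm_of_isHermitian hS
  linear_combination this c a + this a b + this b c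

theorem sqnorm_sub_sub_sqnorm_sub (hS : S.IsHermitian) (w a b : Fin d → ℝ) :
    sqnorm S (w - a) - sqnorm S (w - b) = 2 * (w ⬝ᵥ S *ᵥ (b - a)) + sqnorm S a - sqnorm S b := by
  simp only [sqnorm, mulVec_sub, dotProduct_sub, sub_dotProduct]
  have := dotProduct_mulVec_comm_of_isHermitian hS
  linear_combination this w a - this w b

/-- Young's inequality for the dual norms `‖·‖_{S⁻¹}`, `‖·‖_S`, followed by
`t l ‖u‖²_{S⁻¹} ≤ ‖u‖²_R`. -/
theorem dotProduct_le_sqnorm_add_sqnorm (hS : S.PosDef) {R : Matrix (Fin d) (Fin d) ℝ}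
    {t l : ℝ} (ht : 0 < t) (hl : 0 < l) (hRS : (R - (t * l) • S⁻¹).PosSemidef)
    (u v : Fin d → ℝ) :
    u ⬝ᵥ v ≤ 1 / (2 * l) * sqnorm R u + 1 / (2 * t) * sqnorm S v := by
  have hSinv : S⁻¹ * S = 1 := nonsing_inv_mul _ hS.det_pos.ne'.isUnit
  have hR : t * l * sqnorm S⁻¹ u ≤ sqnorm R u := by
    have h := sqnorm_nonneg_s11 hRS u
    simp only [sqnorm, sub_mulVec, smul_mulVec, dotProduct_sub, dotProduct_smul,
      smul_eq_mul] at h ⊢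
    linarith
  have hYoung : 2 * t * (u ⬝ᵥ v) ≤ t ^ 2 * sqnorm S⁻¹ u + sqnorm S v := by
    have h := sqnorm_nonneg_s11 hS.inv.posSemidef (t • u - S *ᵥ v)
    have hcomm := dotProduct_mulVec_comm_of_isHermitian hS.inv.isHermitian (S *ᵥ v) u
    simp only [sqnorm, mulVec_sub, mulVec_smul, mulVec_mulVec, hSinv, one_mulVec,
      dotProduct_sub, sub_dotProduct, dotProduct_smul, smul_dotProduct, smul_eq_mul] at h hcomm ⊢
    rw [dotProduct_comm (S *ᵥ v) v] at h
    nlinarith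
  have key : 2 * t * l * (u ⬝ᵥ v) ≤ t * sqnorm R u + l * sqnorm S v := by
    nlinarith [mul_le_mul_of_nonneg_left hR ht.le, mul_le_mul_of_nonneg_left hYoung hl.le]
  rw [show 1 / (2 * l) * sqnorm R u + 1 / (2 * t) * sqnorm S v
      = (t * sqnorm R u + l * sqnorm S v) / (2 * t * l) by field_simp,
    le_div_iff₀ (by positivity)]
  linarith

end QuadraticForm

theorem transpose_mul_mul_mulVec_dotProduct {n m : ℕ} (A : Matrix (Fin m) (Fin n) ℝ)
    (R : Matrix (Fin m) (Fin m) ℝ) (u v : Fin n → ℝ) :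
    (Aᵀ * R * A) *ᵥ u ⬝ᵥ v = R *ᵥ (A *ᵥ u) ⬝ᵥ A *ᵥ v := by
  rw [Matrix.mul_assoc, ← mulVec_mulVec, ← mulVec_mulVec, dotProduct_comm, dotProduct_mulVec,
    vecMul_transpose, dotProduct_comm]

theorem le_add_two_sqrt_mul_of_forall_le_div_add_mul {D a b : ℝ} (ha : 0 ≤ a)
    (h : ∀ c : ℝ, 0 < c → c ≤ 1 → D ≤ a / c + c * b) : D ≤ a + 2 * √(a * b) := by
  rcases le_or_gt b a with hba | hab
  · have hb : b ≤ 2 * √(a * b) := by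
      rcases le_or_gt b 0 with hb | hb
      · linarith [Real.sqrt_nonneg (a * b)]
      · calc b = √(b * b) := (Real.sqrt_mul_self hb.le).symm
          _ ≤ √(a * b) := Real.sqrt_le_sqrt (mul_le_mul_of_nonneg_right hba hb.le)
          _ ≤ 2 * √(a * b) := by linarith [Real.sqrt_nonneg (a * b)]
    have h1 := h 1 one_pos le_rfl
    rw [div_one, one_mul] at h1
    linarith
  rcases ha.eq_or_lt with rfl | ha
  · -- letting `c → 0⁺` in `D ≤ c * b`
    have hlim : Tendsto (fun c : ℝ => c * b) (𝓝[>] 0) (𝓝 0) :=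
      ((continuous_mul_const b).tendsto' 0 0 (zero_mul b)).mono_left nhdsWithin_le_nhds
    have hev : ∀ᶠ c in 𝓝[>] (0 : ℝ), D ≤ c * b := by
      filter_upwards [Ioo_mem_nhdsGT one_pos] with c hc
      simpa using h c hc.1 hc.2.le
    simpa using ge_of_tendsto hlim hev
  · -- the minimising `c = √(a / b)`
    have hb := ha.trans hab
    have hsa := Real.sqrt_pos.2 ha
    have hsb := Real.sqrt_pos.2 hb
    have hc1 : √a / √b ≤ 1 := (div_le_one hsb).2 (Real.sqrt_le_sqrt hab.le)
    have h1 := h (√a / √b) (by positivity) hc1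
    have hval : a / (√a / √b) + √a / √b * b = 2 * √(a * b) := by
      rw [Real.sqrt_mul ha.le]
      nth_rewrite 1 [← Real.sq_sqrt ha.le]
      nth_rewrite 3 [← Real.sq_sqrt hb.le]
      field_simp
      ring
    linarith [Real.sqrt_nonneg (a * b)]

theorem ConvexOn.le_add_add_two_sqrt_of_forall_le {E : Type*} [AddCommGroup E] [Module ℝ E]
    {h q : E → ℝ} (hh : ConvexOn ℝ Set.univ h) (hq : ∀ (c : ℝ) (v : E), q (c • v) = c ^ 2 * q v)
    {a : ℝ} (ha : 0 ≤ a) {z : E} (hz : ∀ w, h z ≤ h w + q (w - z) + a) (y : E) :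
    h z ≤ h y + a + 2 * √(a * q (y - z)) := by
  suffices h z - h y ≤ a + 2 * √(a * q (y - z)) by linarith
  refine le_add_two_sqrt_mul_of_forall_le_div_add_mul ha fun c hc hc1 => ?_
  have hseg := hh.2 (Set.mem_univ z) (Set.mem_univ y) (sub_nonneg.2 hc1) hc.le (by ring)
  have hw := hz ((1 - c) • z + c • y)
  rw [show (1 - c) • z + c • y - z = c • (y - z) by module, hq] at hw
  simp only [smul_eq_mul] at hseg
  rw [div_add' _ _ _ hc.ne', le_div_iff₀ hc]
  nlinarith

theorem Monotone.antitone_one_div_two_mul {s : ℕ → ℝ} (hs : Monotone s) (hpos : ∀ k, 0 < s k) :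
    Antitone fun k => 1 / (2 * s k) :=
  fun i j hij => one_div_le_one_div_of_le (by linarith [hpos i]) (by linarith [hs hij])

theorem sum_range_mul_sub_succ_le {a c : ℕ → ℝ} (ha : ∀ k, 0 ≤ a k) (hc : Antitone c)
    (N : ℕ) : ∑ k ∈ range N, c k * (a k - a (k + 1)) ≤ c 0 * a 0 - c N * a N := by
  induction N with
  | zero => simp
  | succ N ih =>
    rw [sum_range_succ]
    nlinarith [mul_le_mul_of_nonneg_right (hc N.le_succ) (ha (N + 1))]

section Jensen

variable {E ι : Type*} [AddCommGroup E] [Module ℝ E] {φ : E → ℝ} {t : Finset ι}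

theorem ConvexOn.card_mul_map_average_le (hφ : ConvexOn ℝ Set.univ φ) (ht : t.Nonempty)
    (p : ι → E) : (#t : ℝ) * φ ((#t : ℝ)⁻¹ • ∑ i ∈ t, p i) ≤ ∑ i ∈ t, φ (p i) := by
  have hN : (0 : ℝ) < #t := by exact_mod_cast ht.card_pos
  have hJ := hφ.map_sum_le (t := t) (w := fun _ => (#t : ℝ)⁻¹) (p := p)
    (fun _ _ => by positivity) (by simp [hN.ne']) (fun _ _ => Set.mem_univ _)
  rw [← smul_sum, ← smul_sum, smul_eq_mul] at hJ
  calc (#t : ℝ) * φ ((#t : ℝ)⁻¹ • ∑ i ∈ t, p i)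
      ≤ #t * ((#t : ℝ)⁻¹ * ∑ i ∈ t, φ (p i)) := by gcongr
    _ = ∑ i ∈ t, φ (p i) := by field_simp

theorem ConcaveOn.sum_le_card_mul_map_average (hφ : ConcaveOn ℝ Set.univ φ) (ht : t.Nonempty)
    (p : ι → E) : ∑ i ∈ t, φ (p i) ≤ (#t : ℝ) * φ ((#t : ℝ)⁻¹ • ∑ i ∈ t, p i) := by
  have := hφ.neg.card_mul_map_average_le ht p
  simp only [Pi.neg_apply, sum_neg_distrib, mul_neg] at this
  linarith

end Jensen

section Lagrangian

variable {n m : ℕ} {f : (Fin n → ℝ) → ℝ} {g : (Fin m → ℝ) → ℝ} (A : Matrix (Fin m) (Fin n) ℝ)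

theorem convexOn_lag_left (hf : ConvexOn ℝ Set.univ f) (g) (y : Fin m → ℝ) :
    ConvexOn ℝ Set.univ (fun x => Lag f g A x y) := by
  have hlin := LinearMap.convexOn ((dotProductBilin ℝ ℝ).flip y ∘ₗ A.mulVecLin) convex_univ
  exact ((hf.add hlin).add_const (-g y)).congr fun x _ => by simp [Lag, sub_eq_add_neg]

theorem concaveOn_lag_right (f) (hg : ConvexOn ℝ Set.univ g) (x : Fin n → ℝ) :
    ConcaveOn ℝ Set.univ (fun y => Lag f g A x y) := by
  have hlin := LinearMap.concaveOn (dotProductBilin ℝ ℝ (A *ᵥ x)) convex_univ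
  exact ((hlin.sub hg).add_const (f x)).congr fun y _ => by simp [Lag, add_sub_assoc, add_comm]

theorem card_mul_lag_average_sub_le (hf : ConvexOn ℝ Set.univ f) (hg : ConvexOn ℝ Set.univ g)
    {ι : Type*} {s : Finset ι} (hs : s.Nonempty) (xs : ι → Fin n → ℝ) (ys : ι → Fin m → ℝ)
    (x : Fin n → ℝ) (y : Fin m → ℝ) :
    (#s : ℝ) * (Lag f g A ((#s : ℝ)⁻¹ • ∑ i ∈ s, xs i) y - Lag f g A x ((#s : ℝ)⁻¹ • ∑ i ∈ s, ys i))
      ≤ ∑ i ∈ s, (Lag f g A (xs i) y - Lag f g A x (ys i)) := by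
  rw [mul_sub, sum_sub_distrib]
  exact sub_le_sub ((convexOn_lag_left A hf g y).card_mul_map_average_le hs xs)
    ((concaveOn_lag_right A f hg x).sum_le_card_mul_map_average hs ys)

end Lagrangian

theorem ConvexOn.add_sqnorm_le_of_approx_prox {d : ℕ} {S : Matrix (Fin d) (Fin d) ℝ}
    (hS : S.IsHermitian) {G : (Fin d → ℝ) → ℝ} (hG : ConvexOn ℝ Set.univ G) {t e : ℝ}
    (ht : 0 < t) (he : 0 ≤ e) {b₀ b₁ : Fin d → ℝ}
    (hb₁ : ∀ w, G b₁ + 1 / (2 * t) * sqnorm S (b₁ - b₀) - e / 2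
      ≤ G w + 1 / (2 * t) * sqnorm S (w - b₀)) (y : Fin d → ℝ) :
    G b₁ + 1 / (2 * t) * sqnorm S (b₁ - b₀)
      ≤ G y + 1 / (2 * t) * (sqnorm S (y - b₀) - sqnorm S (y - b₁))
        + e / 2 + √(e / t) * mnorm S (y - b₁) := by
  set H : (Fin d → ℝ) → ℝ := fun w => G w + 1 / (2 * t) * (sqnorm S (w - b₀) - sqnorm S (w - b₁))
  -- `H` differs from `G` by an affine function, since the quadratic parts of the two norms cancel
  have hH : ConvexOn ℝ Set.univ H := by
    have hlin := LinearMap.convexOn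
      ((1 / t) • (dotProductBilin ℝ ℝ).flip (S *ᵥ (b₁ - b₀))) convex_univ
    refine ((hG.add hlin).add_const (1 / (2 * t) * (sqnorm S b₀ - sqnorm S b₁))).congr
      fun w _ => ?_
    simp only [H, sqnorm_sub_sub_sqnorm_sub hS, Pi.add_apply, LinearMap.smul_apply,
      LinearMap.flip_apply, dotProductBilin_apply_apply, smul_eq_mul]
    ring
  have hq : ∀ (c : ℝ) (v : Fin d → ℝ),
      1 / (2 * t) * sqnorm S (c • v) = c ^ 2 * (1 / (2 * t) * sqnorm S v) := fun c v => by
    rw [sqnorm_smul]; ring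
  have hsharp := hH.le_add_add_two_sqrt_of_forall_le (q := fun v => 1 / (2 * t) * sqnorm S v)
    hq (a := e / 2) (by positivity) (z := b₁)
    (fun w => by simp only [H, sub_self, sqnorm_zero]; linarith [hb₁ w]) y
  have hsqrt : 2 * √(e / 2 * (1 / (2 * t) * sqnorm S (y - b₁))) = √(e / t) * mnorm S (y - b₁) := by
    rw [mnorm, ← sqnorm, ← Real.sqrt_mul (by positivity), ← Real.sqrt_sq zero_le_two,
      ← Real.sqrt_mul (sq_nonneg 2)]
    congr 1
    field_simp
    ring
  simp only [H, sub_self, sqnorm_zero] at hsharp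
  linarith

section Iteration

variable {n m : ℕ} {f : (Fin n → ℝ) → ℝ} {g : (Fin m → ℝ) → ℝ} {A : Matrix (Fin m) (Fin n) ℝ}
  {S R : Matrix (Fin m) (Fin m) ℝ} {t l e δ : ℝ} {xₖ x₁ : Fin n → ℝ} {y₁ b₀ b₁ : Fin m → ℝ}

theorem lag_sub_lag_le_of_primal_update (hR : R.IsHermitian)
    (hx₁ : ∀ x, f x + A *ᵥ x ⬝ᵥ y₁ ≥ f x₁ + A *ᵥ x₁ ⬝ᵥ y₁
      + ((1 / l) • (Aᵀ * R * A) *ᵥ (xₖ - x₁)) ⬝ᵥ (x - x₁) - δ) (x : Fin n → ℝ) :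
    Lag f g A x₁ y₁ - Lag f g A x y₁ ≤ δ + 1 / (2 * l) * (sqnorm R (A *ᵥ (x - xₖ))
      - sqnorm R (A *ᵥ (xₖ - x₁)) - sqnorm R (A *ᵥ (x - x₁))) := by
  have hpol := two_mul_mulVec_sub_dotProduct_sub hR (A *ᵥ xₖ) (A *ᵥ x₁) (A *ᵥ x)
  simp only [← mulVec_sub] at hpol
  have h := hx₁ x
  rw [smul_dotProduct, smul_eq_mul, transpose_mul_mul_mulVec_dotProduct] at h
  have hcoef : 1 / (2 * l) * (sqnorm R (A *ᵥ (x - xₖ)) - sqnorm R (A *ᵥ (xₖ - x₁))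
      - sqnorm R (A *ᵥ (x - x₁))) = -(1 / l * (R *ᵥ (A *ᵥ (xₖ - x₁)) ⬝ᵥ A *ᵥ (x - x₁))) := by
    rw [show sqnorm R (A *ᵥ (x - xₖ)) - sqnorm R (A *ᵥ (xₖ - x₁)) - sqnorm R (A *ᵥ (x - x₁))
      = -(2 * (R *ᵥ (A *ᵥ (xₖ - x₁)) ⬝ᵥ A *ᵥ (x - x₁))) by linarith]
    ring
  rw [hcoef]
  simp only [Lag]
  linarith

theorem lag_sub_lag_le_of_dual_update (hS : S.PosSemidef) (hg : ConvexOn ℝ Set.univ g)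
    (ht : 0 < t) (he : 0 ≤ e)
    (hy₁ : ∀ w, g w ≥ g y₁ + ((1 / t) • S *ᵥ (b₀ - y₁) + A *ᵥ xₖ) ⬝ᵥ (w - y₁) - e / 2)
    (hb₁ : ∀ w, g w - A *ᵥ x₁ ⬝ᵥ w + 1 / (2 * t) * sqnorm S (w - b₀)
      ≥ g b₁ - A *ᵥ x₁ ⬝ᵥ b₁ + 1 / (2 * t) * sqnorm S (b₁ - b₀) - e / 2) (y : Fin m → ℝ) :
    Lag f g A x₁ y - Lag f g A x₁ y₁ ≤ A *ᵥ (xₖ - x₁) ⬝ᵥ (y₁ - b₁)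
      - 1 / (2 * t) * sqnorm S (y₁ - b₁)
      + 1 / (2 * t) * (sqnorm S (y - b₀) - sqnorm S (y - b₁))
      + √(e / t) * mnorm S (y - b₁) + e := by
  have hG : ConvexOn ℝ Set.univ fun w => g w - A *ᵥ x₁ ⬝ᵥ w :=
    (hg.sub (LinearMap.concaveOn (dotProductBilin ℝ ℝ (A *ᵥ x₁)) convex_univ)).congr
      fun w _ => by simp
  have hprox := hG.add_sqnorm_le_of_approx_prox hS.isHermitian ht he (b₀ := b₀) (b₁ := b₁)
    (fun w => by linarith [hb₁ w]) y
  have hpol := two_mul_mulVec_sub_dotProduct_sub hS.isHermitian b₀ y₁ b₁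
  have hcoef : 1 / t * (S *ᵥ (b₀ - y₁) ⬝ᵥ (b₁ - y₁)) = 1 / (2 * t) * (sqnorm S (b₀ - y₁)
      + sqnorm S (b₁ - y₁) - sqnorm S (b₁ - b₀)) := by
    rw [← hpol]; ring
  have hsubgrad := hy₁ b₁
  rw [add_dotProduct, smul_dotProduct, smul_eq_mul, hcoef] at hsubgrad
  have hnn : 0 ≤ 1 / (2 * t) * sqnorm S (b₀ - y₁) :=
    mul_nonneg (by positivity) (sqnorm_nonneg_s11 hS _)
  rw [sqnorm_sub_comm_s11 S y₁ b₁]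
  simp only [Lag, mulVec_sub, sub_dotProduct, dotProduct_sub] at hsubgrad ⊢
  linarith

theorem lag_sub_lag_le_of_iteration (hS : S.PosDef) (hR : R.IsHermitian)
    (hg : ConvexOn ℝ Set.univ g) (ht : 0 < t) (hl : 0 < l) (he : 0 ≤ e)
    (hRS : (R - (t * l) • S⁻¹).PosSemidef)
    (hy₁ : ∀ w, g w ≥ g y₁ + ((1 / t) • S *ᵥ (b₀ - y₁) + A *ᵥ xₖ) ⬝ᵥ (w - y₁) - e / 2)
    (hx₁ : ∀ x, f x + A *ᵥ x ⬝ᵥ y₁ ≥ f x₁ + A *ᵥ x₁ ⬝ᵥ y₁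
      + ((1 / l) • (Aᵀ * R * A) *ᵥ (xₖ - x₁)) ⬝ᵥ (x - x₁) - δ)
    (hb₁ : ∀ w, g w - A *ᵥ x₁ ⬝ᵥ w + 1 / (2 * t) * sqnorm S (w - b₀)
      ≥ g b₁ - A *ᵥ x₁ ⬝ᵥ b₁ + 1 / (2 * t) * sqnorm S (b₁ - b₀) - e / 2)
    (x : Fin n → ℝ) (y : Fin m → ℝ) :
    Lag f g A x₁ y - Lag f g A x y₁
      ≤ 1 / (2 * t) * (sqnorm S (y - b₀) - sqnorm S (y - b₁))
        + 1 / (2 * l) * (sqnorm R (A *ᵥ (x - xₖ)) - sqnorm R (A *ᵥ (x - x₁)))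
        + √(e / t) * mnorm S (y - b₁) + (e + δ) := by
  have hleft := lag_sub_lag_le_of_primal_update (g := g) hR hx₁ x
  have hright := lag_sub_lag_le_of_dual_update (f := f) hS.posSemidef hg ht he hy₁ hb₁ y
  have hcross := dotProduct_le_sqnorm_add_sqnorm hS ht hl hRS (A *ᵥ (xₖ - x₁)) (y₁ - b₁)
  linarith

end Iteration

theorem ergodic_ineq_general {n m : ℕ}
    (f : (Fin n → ℝ) → ℝ) (g : (Fin m → ℝ) → ℝ)
    (hf : ConvexOn ℝ Set.univ f) (hg : ConvexOn ℝ Set.univ g)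
    (A : Matrix (Fin m) (Fin n) ℝ)
    (S R : Matrix (Fin m) (Fin m) ℝ) (hS : S.PosDef) (hR : R.PosDef)
    (τ lam : ℕ → ℝ) (hτpos : ∀ k, 0 < τ k) (hlampos : ∀ k, 0 < lam k)
    (hτmono : Monotone τ) (hlammono : Monotone lam)
    (hPD : ∀ k, (R - (τ k * lam k) • S⁻¹).PosDef)
    (ε δ : ℕ → ℝ) (hεnn : ∀ k, 0 ≤ ε k)
    (xseq : ℕ → Fin n → ℝ) (yseq ybar : ℕ → Fin m → ℝ)
    (hi : ∀ k, ∀ y, g y ≥ g (yseq (k+1)) +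
        ((1 / τ k) • S.mulVec (ybar k - yseq (k+1)) + A.mulVec (xseq k)) ⬝ᵥ
          (y - yseq (k+1)) - ε (k+1) / 2)
    (hii : ∀ k, ∀ x, f x + A.mulVec x ⬝ᵥ yseq (k+1)
        ≥ f (xseq (k+1)) + A.mulVec (xseq (k+1)) ⬝ᵥ yseq (k+1)
          + ((1 / lam k) • (Aᵀ * R * A).mulVec (xseq k - xseq (k+1))) ⬝ᵥ
              (x - xseq (k+1)) - δ (k+1))
    (hiii : ∀ k, ∀ y, g y - A.mulVec (xseq (k+1)) ⬝ᵥ y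
          + (1 / (2 * τ k)) * sqnorm S (y - ybar k)
        ≥ g (ybar (k+1)) - A.mulVec (xseq (k+1)) ⬝ᵥ ybar (k+1)
          + (1 / (2 * τ k)) * sqnorm S (ybar (k+1) - ybar k) - ε (k+1) / 2) :
    ∀ N : ℕ, 1 ≤ N → ∀ (x : Fin n → ℝ) (y : Fin m → ℝ),
      (N : ℝ) * (Lag f g A ((N : ℝ)⁻¹ • ∑ k ∈ Finset.range N, xseq (k+1)) y
          - Lag f g A x ((N : ℝ)⁻¹ • ∑ k ∈ Finset.range N, yseq (k+1)))
        ≤ (1 / (2 * τ 0)) * sqnorm S (y - ybar 0)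
          - (1 / (2 * τ N)) * sqnorm S (y - ybar N)
          + (1 / (2 * lam 0)) * sqnorm R (A.mulVec (x - xseq 0))
          - (1 / (2 * lam N)) * sqnorm R (A.mulVec (x - xseq N))
          + ∑ k ∈ Finset.range N, Real.sqrt (ε (k+1) / τ k) * mnorm S (y - ybar (k+1))
          + ∑ k ∈ Finset.range N, (2 * ε (k+1) + δ (k+1)) := by
  intro N hN x y
  have hgap := card_mul_lag_average_sub_le A hf hg ⟨0, mem_range.2 hN⟩
    (fun k => xseq (k + 1)) (fun k => yseq (k + 1)) x y
  rw [card_range] at hgap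
  have hsteps := sum_le_sum fun k (_ : k ∈ range N) =>
    (lag_sub_lag_le_of_iteration hS hR.isHermitian hg (hτpos k) (hlampos k) (hεnn (k + 1))
      (hPD k).posSemidef (hi k) (hii k) (hiii k) x y)
  simp only [sum_add_distrib] at hsteps ⊢
  have hslack : ∑ k ∈ range N, ε (k + 1) ≤ ∑ k ∈ range N, 2 * ε (k + 1) :=
    sum_le_sum fun k _ => by linarith [hεnn (k + 1)]
  have htelS := sum_range_mul_sub_succ_le (fun k => sqnorm_nonneg_s11 hS.posSemidef (y - ybar k))
    (hτmono.antitone_one_div_two_mul hτpos) N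
  have htelR := sum_range_mul_sub_succ_le
    (fun k => sqnorm_nonneg_s11 hR.posSemidef (A *ᵥ (x - xseq k)))
    (hlammono.antitone_one_div_two_mul hlampos) N
  linarith

/-- Ergodic inequality (3.8). -/
theorem ergodic_ineq {n m : ℕ}
    (f : (Fin n → ℝ) → ℝ) (g : (Fin m → ℝ) → ℝ)
    (hf : ConvexOn ℝ Set.univ f) (hg : ConvexOn ℝ Set.univ g)
    (A : Matrix (Fin m) (Fin n) ℝ)
    (S R : Matrix (Fin m) (Fin m) ℝ) (hS : S.PosDef) (hR : R.PosDef)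
    (τ lam : ℕ → ℝ) (hτpos : ∀ k, 0 < τ k) (hlampos : ∀ k, 0 < lam k)
    (hτmono : Monotone τ) (hlammono : Monotone lam)
    (hPD : ∀ k, (R - (τ k * lam k) • S⁻¹).PosDef)
    (ε δ : ℕ → ℝ) (hεnn : ∀ k, 0 ≤ ε k) (hδnn : ∀ k, 0 ≤ δ k)
    (xseq : ℕ → Fin n → ℝ) (yseq ybar : ℕ → Fin m → ℝ)
    (hi : ∀ k, ∀ y, g y ≥ g (yseq (k+1)) +
        ((1 / τ k) • S.mulVec (ybar k - yseq (k+1)) + A.mulVec (xseq k)) ⬝ᵥ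
          (y - yseq (k+1)) - ε (k+1) / 2)
    (hii : ∀ k, ∀ x, f x + A.mulVec x ⬝ᵥ yseq (k+1)
        ≥ f (xseq (k+1)) + A.mulVec (xseq (k+1)) ⬝ᵥ yseq (k+1)
          + ((1 / lam k) • (Aᵀ * R * A).mulVec (xseq k - xseq (k+1))) ⬝ᵥ
              (x - xseq (k+1)) - δ (k+1))
    (hiii : ∀ k, ∀ y, g y - A.mulVec (xseq (k+1)) ⬝ᵥ y
          + (1 / (2 * τ k)) * sqnorm S (y - ybar k)
        ≥ g (ybar (k+1)) - A.mulVec (xseq (k+1)) ⬝ᵥ ybar (k+1)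
          + (1 / (2 * τ k)) * sqnorm S (ybar (k+1) - ybar k) - ε (k+1) / 2) :
    ∀ N : ℕ, 1 ≤ N → ∀ (x : Fin n → ℝ) (y : Fin m → ℝ),
      (N : ℝ) * (Lag f g A ((N : ℝ)⁻¹ • ∑ k ∈ Finset.range N, xseq (k+1)) y
          - Lag f g A x ((N : ℝ)⁻¹ • ∑ k ∈ Finset.range N, yseq (k+1)))
        ≤ (1 / (2 * τ 0)) * sqnorm S (y - ybar 0)
          - (1 / (2 * τ N)) * sqnorm S (y - ybar N)
          + (1 / (2 * lam 0)) * sqnorm R (A.mulVec (x - xseq 0))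
          - (1 / (2 * lam N)) * sqnorm R (A.mulVec (x - xseq N))
          + ∑ k ∈ Finset.range N, Real.sqrt (ε (k+1) / τ k) * mnorm S (y - ybar (k+1))
          + ∑ k ∈ Finset.range N, (2 * ε (k+1) + δ (k+1)) :=
  ergodic_ineq_general f g hf hg A S R hS hR τ lam hτpos hlampos hτmono hlammono hPD ε δ hεnn xseq
    yseq ybar hi hii hiii
end
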